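/- Fix k ∈ {1, …, n}. The dual cone of the sum-of-largest-entries cone K_vSum = {(t, x) ∈ ℝ × ℝⁿ : ∑_{i=1}^k x_{[i]} ≤ t}, with respect to the standard inner product on ℝ^{n+1}, equals {(t, x) ∈ ℝ × ℝⁿ : −t ≤ x_i ≤ 0 for i = 1, …, n, and ∑_{i=1}^n x_i = −t k}. -/

import Mathlib

open Finset

/-- The entries of `x` sorted in nonincreasing order, so `sortDesc x i = x_{[i+1]}`
(`x_{[1]} ≥ … ≥ x_{[n]}` in one-based notation). -/
noncomputable def sortDesc {n : ℕ} (x : Fin n → ℝ) : Fin n → ℝ :=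
  fun i => (x ∘ Tuple.sort x) i.rev

/-- The sum of the `k` largest entries of `x`, `∑_{i=1}^k x_{[i]}`. -/
noncomputable def sumLargest {n : ℕ} (k : ℕ) (x : Fin n → ℝ) : ℝ :=
  ∑ i : Fin n, if (i : ℕ) < k then sortDesc x i else 0

/-! `sumLargest k x` is the value of the linear program `max {⟨w, x⟩ : 0 ≤ w ≤ 1, ∑ wᵢ = k}`,
attained at the indicator of the `k` largest entries. Hence `(t, x)` lies in the cone iff
`⟨w, x⟩ ≤ t` for every such `w`, and the dual cone is generated by the points `(1, -w)`. -/

theorem sum_mul_le_of_threshold {ι : Type*} [Fintype ι] [DecidableEq ι] (T : Finset ι)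
    {d w : ι → ℝ} {c s : ℝ} (hT : ∀ i ∈ T, c ≤ d i) (hTc : ∀ i ∉ T, d i ≤ c)
    (hw : ∀ i, 0 ≤ w i ∧ w i ≤ s) (hsum : ∑ i, w i = s * #T) :
    ∑ i, w i * d i ≤ s * ∑ i ∈ T, d i := by
  -- The difference of the two sides is `∑ eᵢ (dᵢ - c)`, whose terms are all `≤ 0`.
  set e : ι → ℝ := fun i => w i - if i ∈ T then s else 0
  have hsplit : ∀ f : ι → ℝ, ∑ i, w i * f i = ∑ i, e i * f i + s * ∑ i ∈ T, f i := by
    intro f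
    simp only [e, sub_mul, sum_sub_distrib, ite_mul, zero_mul, sum_ite_mem, univ_inter,
      mul_sum]
    ring
  have hle : ∀ i, e i * d i ≤ e i * c := by
    intro i
    by_cases hi : i ∈ T
    · simp only [e, hi, if_true]
      nlinarith [hT i hi, (hw i).2]
    · simp only [e, hi, if_false, sub_zero]
      exact mul_le_mul_of_nonneg_left (hTc i hi) (hw i).1
  have hc : ∑ i, e i * c + s * ∑ i ∈ T, c = s * #T * c := by
    rw [← hsplit, ← sum_mul, hsum]
  calc ∑ i, w i * d i = ∑ i, e i * d i + s * ∑ i ∈ T, d i := hsplit d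
    _ ≤ ∑ i, e i * c + s * ∑ i ∈ T, d i := 
      by linarith [sum_le_sum fun i (_ : i ∈ univ) => hle i]
    _ = s * ∑ i ∈ T, d i := by
      simp only [sum_const, nsmul_eq_mul] at hc
      linarith

section

variable {n : ℕ}

theorem sortDesc_antitone (x : Fin n → ℝ) : Antitone (sortDesc x) :=
  fun _ _ hij => Tuple.monotone_sort x (Fin.rev_le_rev.mpr hij)

noncomputable def descPerm (x : Fin n → ℝ) : Equiv.Perm (Fin n) :=
  Fin.revPerm.trans (Tuple.sort x)

theorem apply_descPerm (x : Fin n → ℝ) (i : Fin n) : x (descPerm x i) = sortDesc x i := rfl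

theorem sum_mul_eq_sum_comp_descPerm (w x : Fin n → ℝ) :
    ∑ i, w i * x i = ∑ i, w (descPerm x i) * sortDesc x i :=
  (Equiv.sum_comp (descPerm x) fun i => w i * x i).symm

theorem sumLargest_eq_sum_filter (k : ℕ) (x : Fin n → ℝ) :
    sumLargest k x = ∑ i ∈ {i : Fin n | (i : ℕ) < k}, sortDesc x i :=
  (sum_filter _ _).symm

theorem card_filter_val_lt_of_le {k : ℕ} (hkn : k ≤ n) : #{i : Fin n | (i : ℕ) < k} = k := by
  rw [Fin.card_filter_val_lt, min_eq_right hkn]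

theorem sum_mul_le_mul_sumLargest {k : ℕ} (hk1 : 1 ≤ k) (hkn : k ≤ n) (x : Fin n → ℝ)
    {s : ℝ} {w : Fin n → ℝ} (hw : ∀ i, 0 ≤ w i ∧ w i ≤ s) (hsum : ∑ i, w i = s * k) :
    ∑ i, w i * x i ≤ s * sumLargest k x := by
  rw [sum_mul_eq_sum_comp_descPerm, sumLargest_eq_sum_filter]
  refine sum_mul_le_of_threshold _ (c := sortDesc x ⟨k - 1, by omega⟩) ?_ ?_
    (fun i => hw _) ?_
  · intro i hi
    simp only [mem_filter, mem_univ, true_and] at hi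
    exact sortDesc_antitone x (Fin.mk_le_mk.mpr (by omega))
  · intro i hi
    simp only [mem_filter, mem_univ, true_and, not_lt] at hi
    exact sortDesc_antitone x (Fin.mk_le_mk.mpr (by omega))
  · rw [Equiv.sum_comp, hsum, card_filter_val_lt_of_le hkn]

theorem exists_weight_sum_mul_eq_sumLargest {k : ℕ} (hkn : k ≤ n) (x : Fin n → ℝ) :
    ∃ w : Fin n → ℝ, (∀ i, 0 ≤ w i ∧ w i ≤ 1) ∧ ∑ i, w i = k ∧
      ∑ i, w i * x i = sumLargest k x := by
  set top : Fin n → ℝ := fun i => if (i : ℕ) < k then 1 else 0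
  refine ⟨fun i => top ((descPerm x).symm i), fun i => ?_, ?_, ?_⟩
  · simp only [top]
    split_ifs <;> norm_num
  · rw [← Equiv.sum_comp (descPerm x)]
    simp only [Equiv.symm_apply_apply, top, sum_boole, Nat.cast_inj]
    exact card_filter_val_lt_of_le hkn
  · rw [sum_mul_eq_sum_comp_descPerm, sumLargest]
    simp only [Equiv.symm_apply_apply, top, boole_mul]

theorem sumLargest_le_of_forall_weight {k : ℕ} (hkn : k ≤ n) {x : Fin n → ℝ} {t : ℝ}
    (h : ∀ w : Fin n → ℝ, (∀ i, 0 ≤ w i ∧ w i ≤ 1) → ∑ i, w i = k → ∑ i, w i * x i ≤ t) :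
    sumLargest k x ≤ t := by
  obtain ⟨w, hw, hsum, hx⟩ := exists_weight_sum_mul_eq_sumLargest hkn x
  exact hx ▸ h w hw hsum

theorem dual_conditions_of_nonneg {k : ℕ} (hkn : k ≤ n) {a : ℝ} {b : Fin n → ℝ}
    (h : ∀ t v, sumLargest k v ≤ t → 0 ≤ a * t + ∑ i, b i * v i) :
    (∀ i, -a ≤ b i ∧ b i ≤ 0) ∧ ∑ i, b i = -a * k := by
  have key : ∀ (v : Fin n → ℝ) t, (∀ w : Fin n → ℝ, (∀ i, 0 ≤ w i ∧ w i ≤ 1) → ∑ i, w i = k →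
      ∑ i, w i * v i ≤ t) → 0 ≤ a * t + ∑ i, b i * v i :=
    fun v t hv => h t v (sumLargest_le_of_forall_weight hkn hv)
  have hle : ∀ j, b j ≤ 0 := by
    intro j
    have := key (fun i => if i = j then -1 else 0) 0 fun w hw _ => by
      simp only [mul_ite, mul_neg_one, mul_zero, sum_ite_eq', mem_univ, if_true]
      linarith [(hw j).1]
    simpa using this
  have hge : ∀ j, -a ≤ b j := by
    intro j
    have := key (fun i => if i = j then 1 else 0) 1 fun w hw _ => by
      simpa only [mul_ite, mul_one, mul_zero, sum_ite_eq', mem_univ, if_true] using (hw j).2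
    simp only [mul_ite, mul_one, mul_zero, sum_ite_eq', mem_univ, if_true] at this
    linarith
  have hones := key (fun _ => 1) k fun w _ hsum => by simp [hsum]
  have hneg := key (fun _ => -1) (-k) fun w _ hsum => by simp [hsum]
  simp only [mul_one, mul_neg_one, sum_neg_distrib] at hones hneg
  exact ⟨fun j => ⟨hge j, hle j⟩, by linarith⟩

theorem nonneg_of_dual_conditions {k : ℕ} (hk1 : 1 ≤ k) (hkn : k ≤ n) {a : ℝ} {b : Fin n → ℝ}
    (hb : ∀ i, -a ≤ b i ∧ b i ≤ 0) (hsum : ∑ i, b i = -a * k) {t : ℝ} {v : Fin n → ℝ}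
    (hv : sumLargest k v ≤ t) : 0 ≤ a * t + ∑ i, b i * v i := by
  have ha : 0 ≤ a := by linarith [hb ⟨0, by omega⟩]
  have hw := sum_mul_le_mul_sumLargest hk1 hkn v (s := a) (w := fun i => -b i)
    (fun i => ⟨by linarith [hb i], by linarith [hb i]⟩) (by rw [sum_neg_distrib, hsum]; ring)
  simp only [neg_mul, sum_neg_distrib] at hw
  nlinarith [mul_le_mul_of_nonneg_left hv ha]

end

/-- For `1 ≤ k ≤ n`, the dual cone of the sum-of-largest-entries cone
`K_vSum = {(t, x) : ∑_{i=1}^k x_{[i]} ≤ t}` with respect to the standard inner product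
on `ℝ^{n+1}` equals `{(t, x) : −t ≤ xᵢ ≤ 0 for all i, ∑ᵢ xᵢ = −t·k}`. -/
theorem stmt9 {n : ℕ} (k : ℕ) (hk1 : 1 ≤ k) (hkn : k ≤ n) :
    {y : ℝ × (Fin n → ℝ) |
        ∀ z ∈ {z : ℝ × (Fin n → ℝ) | sumLargest k z.2 ≤ z.1},
          y.1 * z.1 + ∑ i, y.2 i * z.2 i ≥ 0} =
    {y : ℝ × (Fin n → ℝ) |
        (∀ i, -y.1 ≤ y.2 i ∧ y.2 i ≤ 0) ∧ ∑ i, y.2 i = -y.1 * k} := by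
  ext ⟨a, b⟩
  simp only [Set.mem_ofPred_eq, Prod.forall, ge_iff_le]
  exact ⟨fun h => dual_conditions_of_nonneg hkn fun t v => h t v,
    fun ⟨hb, hsum⟩ t v => nonneg_of_dual_conditions hk1 hkn hb hsum⟩
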